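/- For the threshold fitness function s_i = 1 if i < K and 0 otherwise, the distribution p_i = δ(i, K-1) (all mass on K-1 mutations) is a stationary distribution of the asexual mutation-selection dynamics, and at this stationary distribution the fraction of offspring surviving selection is Z = e^{-μ}. -/

import Mathlib

/-- The Poisson probability of `k` new mutations, with mean `μ`. -/
noncomputable def pois (μ : ℝ) (k : ℕ) : ℝ := μ ^ k * Real.exp (-μ) / (Nat.factorial k)

open Finset

theorem pois_zero (μ : ℝ) : pois μ 0 = Real.exp (-μ) := by
  simp [pois]

theorem sum_range_succ_dirac_mul (m i : ℕ) (f : ℕ → ℝ) :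
    ∑ j ∈ range (i + 1), (if j = m then (1 : ℝ) else 0) * f (i - j) =
      if m ≤ i then f (i - m) else 0 := by
  simp only [ite_mul, one_mul, zero_mul, sum_ite_eq', mem_range, Nat.lt_succ_iff]

/-- Offspring of the point mass at `K - 1` survive threshold selection only if no new
mutation occurred. -/
theorem threshold_mul_offspring_dirac {K : ℕ} (hK : 1 ≤ K) (f : ℕ → ℝ) (i : ℕ) :
    (if i < K then (1 : ℝ) else 0) *
        ∑ j ∈ range (i + 1), (if j = K - 1 then (1 : ℝ) else 0) * f (i - j) =
      if i = K - 1 then f 0 else 0 := by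
  rw [sum_range_succ_dirac_mul]
  by_cases hi : i = K - 1
  · simp [hi, show K - 1 < K by omega]
  · rw [if_neg hi]
    split_ifs <;> first | omega | simp

theorem asexual_threshold_stationary_general (K : ℕ) (hK : 1 ≤ K) (μ : ℝ)
    (s p q : ℕ → ℝ) (Z : ℝ)
    (hs : ∀ i, s i = if i < K then (1 : ℝ) else 0)
    (hp : ∀ i, p i = if i = K - 1 then (1 : ℝ) else 0)
    (hq : ∀ i, q i = ∑ j ∈ Finset.range (i + 1), p j * pois μ (i - j))
    (hZ : Z = ∑' i, s i * q i) :
    Z = Real.exp (-μ) ∧ ∀ i, s i * q i / Z = p i := by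
  have selected : ∀ i, s i * q i = if i = K - 1 then Real.exp (-μ) else 0 := by
    intro i
    simp only [hs, hq, hp]
    rw [threshold_mul_offspring_dirac hK, pois_zero]
  have hZ_eq : Z = Real.exp (-μ) := by
    simp only [hZ, selected]
    exact tsum_ite_eq (K - 1) _
  refine ⟨hZ_eq, fun i => ?_⟩
  rw [selected, hp, hZ_eq, ite_div, zero_div, div_self (Real.exp_ne_zero _)]

/-- For the threshold fitness function `s i = 1` if `i < K` and `0` otherwise, the
distribution `p i = δ(i, K-1)` is stationary for the asexual mutation-selection
dynamics `q i = ∑_{j ≤ i} p j · Pois_μ(i - j)`, `p' i = s i q i / Z`, and at this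
stationary distribution the surviving fraction is `Z = e^{-μ}`. -/
theorem asexual_threshold_stationary (K : ℕ) (hK : 1 ≤ K) (μ : ℝ) (hμ : 0 < μ)
    (s p q : ℕ → ℝ) (Z : ℝ)
    (hs : ∀ i, s i = if i < K then (1 : ℝ) else 0)
    (hp : ∀ i, p i = if i = K - 1 then (1 : ℝ) else 0)
    (hq : ∀ i, q i = ∑ j ∈ Finset.range (i + 1), p j * pois μ (i - j))
    (hZ : Z = ∑' i, s i * q i) :
    Z = Real.exp (-μ) ∧ ∀ i, s i * q i / Z = p i :=
  asexual_threshold_stationary_general K hK μ s p q Z hs hp hq hZ
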